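/- arXiv:2308.12803 — 6 statements merged into one kernel-verified Lean document; each statement's English description precedes it below -/
import Mathlib

section
/- The quotient group ℤ⁷ / (ℤ-span of the columns of M) is isomorphic, as an abelian group, to (ℤ/2ℤ) × ℤ. (This is the cokernel of ĥ∗ − Id on the first homology of the blown-up Arnoux–Yoccoz surface.) -/
/-!
The two functionals `x ↦ x₀ + x₁ + x₄ + x₅ (mod 2)` and `x ↦ x₄ + x₆ - x₁` vanish on
every column of `AYMatrix`, and conversely every vector annihilated by both is
`AYMatrix *ᵥ v` for an explicit `v`. Together they give a surjection `ℤ⁷ → ℤ/2 × ℤ`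
whose kernel is the image of `AYMatrix`, so the first isomorphism theorem identifies the
cokernel with `ℤ/2 × ℤ`.
-/

/-- The 7×7 integer matrix representing `ĥ∗ − Id` on the first homology of the
blown-up Arnoux–Yoccoz genus-3 surface, with respect to the basis (A,B,C,D,E,F,G). -/
def AYMatrix : Matrix (Fin 7) (Fin 7) ℤ :=
  !![-1,  0,  0,  0,  1,  0,  0;
      0, -1,  0,  0,  0,  1,  0;
      1,  0, -1,  1,  1,  0,  1;
      0,  1,  0, -1,  0,  0,  0;
      0,  0,  1,  0, -1,  0,  0;
      1,  1,  1,  2,  0, -1,  0;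
      0, -1, -1,  0,  1,  1,  0]

open Matrix

namespace AYMatrix

theorem mulVec_eq (v : Fin 7 → ℤ) :
    AYMatrix *ᵥ v = ![-v 0 + v 4, -v 1 + v 5, v 0 - v 2 + v 3 + v 4 + v 6, v 1 - v 3, v 2 - v 4,
      v 0 + v 1 + v 2 + 2 * v 3 - v 5, -v 1 - v 2 + v 4 + v 5] := by
  ext i
  fin_cases i <;>
    simp only [AYMatrix, mulVec, dotProduct, Fin.sum_univ_seven, of_apply, Fin.reduceFinMk,
      Fin.zero_eta, Fin.mk_one, cons_val] <;> ring

def cokernelMap : (Fin 7 → ℤ) →ₗ[ℤ] ZMod 2 × ℤ :=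
  AddMonoidHom.toIntLinearMap <| AddMonoidHom.mk'
    (fun x ↦ (((x 0 + x 1 + x 4 + x 5 : ℤ) : ZMod 2), x 4 + x 6 - x 1))
    (fun x y ↦ by
      ext <;> simp only [Pi.add_apply, Prod.fst_add, Prod.snd_add] <;> push_cast <;> ring)

theorem cokernelMap_apply (x : Fin 7 → ℤ) :
    cokernelMap x = (((x 0 + x 1 + x 4 + x 5 : ℤ) : ZMod 2), x 4 + x 6 - x 1) := rfl

theorem cokernelMap_surjective : Function.Surjective cokernelMap := by
  rintro ⟨a, b⟩
  refine ⟨![0, 0, 0, 0, 0, a.cast, b], ?_⟩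
  simp [cokernelMap_apply]

theorem range_mulVecLin_eq_ker_cokernelMap :
    LinearMap.range AYMatrix.mulVecLin = LinearMap.ker cokernelMap := by
  ext x
  simp only [LinearMap.mem_range, mulVecLin_apply, LinearMap.mem_ker, cokernelMap_apply,
    Prod.mk_eq_zero, ZMod.intCast_zmod_eq_zero_iff_dvd]
  constructor
  · rintro ⟨v, rfl⟩
    simp only [mulVec_eq, cons_val_zero, cons_val_one, cons_val]
    exact ⟨⟨v 2 + v 3, by ring⟩, by ring⟩
  · rintro ⟨⟨k, hk⟩, hx⟩
    push_cast at hk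
    -- the solution of `AYMatrix *ᵥ v = x` with `v 5 = 0`; `hk` makes it integral
    refine ⟨![k - x 0 + x 1 + x 3 - x 4, -x 1, k + x 1 + x 3, -x 1 - x 3, k + x 1 + x 3 - x 4, 0,
      x 0 + x 2 + 2 * x 4 - k], ?_⟩
    ext i
    fin_cases i <;>
      simp only [mulVec_eq, Fin.zero_eta, Fin.mk_one, Fin.reduceFinMk, cons_val] <;> linarith

end AYMatrix

/-- The cokernel `ℤ⁷ / im(ĥ∗ − Id)` is isomorphic to `ℤ/2ℤ × ℤ`. -/
theorem cokernel_iso_zmod2_prod_int :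
    Nonempty (((Fin 7 → ℤ) ⧸ LinearMap.range AYMatrix.mulVecLin) ≃+ (ZMod 2 × ℤ)) := by
  rw [AYMatrix.range_mulVecLin_eq_ker_cokernelMap]
  exact ⟨(AYMatrix.cokernelMap.quotKerEquivOfSurjective
    AYMatrix.cokernelMap_surjective).toAddEquiv⟩
end

section
/- There exist matrices U, V in GL₇(ℤ) such that U·M·V is the diagonal matrix diag(1,1,1,1,1,2,0); that is, the Smith normal form of M over ℤ is diag(1,1,1,1,1,2,0). -/
/-!
Integer row reduction of `M` followed by integer column reduction brings it to
`diag(1,1,1,1,1,2,0)`. The products `U` and `V` of the elementary operations used are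
certified unimodular by exhibiting their inverses, which are again integer matrices.
-/

namespace AYMatrix

def smithLeft : Matrix (Fin 7) (Fin 7) ℤ :=
  !![-1,  0,  0,  0,  0,  0,  0;
      0, -1,  0,  0,  0,  0,  0;
     -1,  0, -1,  0,  0,  0,  0;
      0, -1,  0, -1,  0,  0,  0;
      1,  1,  1,  1,  1,  0,  0;
      1, -1,  2,  0,  3, -1,  0;
      0, -1,  0,  0,  1,  0,  1]

def smithLeftInv : Matrix (Fin 7) (Fin 7) ℤ :=
  !![-1,  0,  0,  0,  0,  0,  0;
      0, -1,  0,  0,  0,  0,  0;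
      1,  0, -1,  0,  0,  0,  0;
      0,  1,  0, -1,  0,  0,  0;
      0,  0,  1,  1,  1,  0,  0;
      1,  1,  1,  3,  3, -1,  0;
      0, -1, -1, -1, -1,  0,  1]

def smithRight : Matrix (Fin 7) (Fin 7) ℤ :=
  !![1,  0,  0,  0,  1, -1, -1;
     0,  1,  0,  0,  0,  0,  1;
     0,  0,  1,  1,  2, -1, -1;
     0,  0,  0,  1,  0,  0,  1;
     0,  0,  0,  0,  1, -1, -1;
     0,  0,  0,  0,  0,  0,  1;
     0,  0,  0,  0,  0,  1,  0]

def smithRightInv : Matrix (Fin 7) (Fin 7) ℤ :=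
  !![1,  0,  0,  0, -1,  0,  0;
     0,  1,  0,  0,  0, -1,  0;
     0,  0,  1, -1, -2,  0, -1;
     0,  0,  0,  1,  0, -1,  0;
     0,  0,  0,  0,  1,  1,  1;
     0,  0,  0,  0,  0,  0,  1;
     0,  0,  0,  0,  0,  1,  0]

lemma smithLeft_mul_smithLeftInv : smithLeft * smithLeftInv = 1 := by decide

lemma smithRight_mul_smithRightInv : smithRight * smithRightInv = 1 := by decide

lemma smithLeft_mul_mul_smithRight :
    smithLeft * AYMatrix * smithRight = Matrix.diagonal ![1, 1, 1, 1, 1, 2, 0] := by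
  decide

end AYMatrix

/-- The Smith normal form of `AYMatrix` over `ℤ` is `diag(1,1,1,1,1,2,0)`:
there are matrices `U, V ∈ GL₇(ℤ)` with `U * M * V` equal to this diagonal matrix. -/
theorem smith_normal_form_AYMatrix :
    ∃ U V : Matrix (Fin 7) (Fin 7) ℤ, IsUnit U.det ∧ IsUnit V.det ∧
      U * AYMatrix * V = Matrix.diagonal ![1, 1, 1, 1, 1, 2, 0] :=
  ⟨AYMatrix.smithLeft, AYMatrix.smithRight,
    Matrix.isUnit_det_of_right_inverse AYMatrix.smithLeft_mul_smithLeftInv,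
    Matrix.isUnit_det_of_right_inverse AYMatrix.smithRight_mul_smithRightInv,
    AYMatrix.smithLeft_mul_mul_smithRight⟩
end

section
/- The vector 2·e₆ lies in the ℤ-span of the columns of M, but e₆ itself does not; consequently the class of e₆ (the homology class F) has order exactly 2 in the cokernel ℤ⁷ / im(M), so it generates the torsion subgroup of the cokernel. -/
/-- The standard basis vector `e₆` of ℤ⁷, corresponding to the homology class `F`. -/
def eSix : Fin 7 → ℤ := ![0, 0, 0, 0, 0, 1, 0]

/-! The row vector `g = (1,0,0,0,0,1,1)` satisfies `g M ≡ 0 (mod 2)` while `g ⬝ e₆ = 1`, so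
`e₆ ∉ im M`; on the other hand `2 e₆ = M (1,0,1,0,1,0,-1)`. For the torsion, the row vector
`u = (0,-1,0,0,1,0,1)` satisfies `u M = 0`, so `u ⬝ v = 0` whenever some nonzero multiple of `v`
lies in `im M`, and every `v` with `u ⬝ v = 0` is congruent modulo `im M` to a multiple of `e₆`. -/

open Matrix

section

variable {m n R : Type*} [Fintype m] [Fintype n] [CommRing R]

theorem Matrix.notMem_range_mulVecLin_of_dvd {A : Matrix m n R} (g : m → R) {p : R}
    (hA : ∀ j, p ∣ (g ᵥ* A) j) {v : m → R} (hv : ¬ p ∣ g ⬝ᵥ v) :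
    v ∉ LinearMap.range A.mulVecLin := by
  rintro ⟨y, rfl⟩
  rw [mulVecLin_apply, dotProduct_mulVec] at hv
  exact hv (Finset.dvd_sum fun j _ => (hA j).mul_right _)

theorem Matrix.dotProduct_eq_zero_of_isOfFinAddOrder [IsDomain R] [CharZero R]
    {A : Matrix m n R} {u : m → R} (hu : u ᵥ* A = 0) {v : m → R}
    (hv : IsOfFinAddOrder (Submodule.Quotient.mk v : (m → R) ⧸ LinearMap.range A.mulVecLin)) :
    u ⬝ᵥ v = 0 := by
  obtain ⟨k, hk0, hk⟩ := hv.exists_nsmul_eq_zero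
  rw [← Submodule.Quotient.mk_smul, Submodule.Quotient.mk_eq_zero] at hk
  obtain ⟨y, hy⟩ := hk
  have : k • (u ⬝ᵥ v) = 0 := by
    rw [← dotProduct_smul, ← hy, mulVecLin_apply, dotProduct_mulVec, hu, zero_dotProduct]
  exact (smul_eq_zero.mp this).resolve_left hk0.ne'

end

theorem Submodule.addOrderOf_mk_eq_two {R M : Type*} [Ring R] [AddCommGroup M] [Module R M]
    {N : Submodule R M} {v : M} (h2 : 2 • v ∈ N) (h1 : v ∉ N) :
    addOrderOf (Submodule.Quotient.mk v : M ⧸ N) = 2 :=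
  addOrderOf_eq_prime (by rwa [← Submodule.Quotient.mk_smul, Submodule.Quotient.mk_eq_zero])
    (by rwa [Ne, Submodule.Quotient.mk_eq_zero])

theorem AYMatrix_mulVec_eq_two_eSix : AYMatrix *ᵥ ![1, 0, 1, 0, 1, 0, -1] = 2 • eSix := by
  decide

theorem two_dvd_vecMul_AYMatrix (j : Fin 7) : 2 ∣ (![1, 0, 0, 0, 0, 1, 1] ᵥ* AYMatrix) j := by
  revert j
  decide

theorem vecMul_AYMatrix_eq_zero : ![0, -1, 0, 0, 1, 0, 1] ᵥ* AYMatrix = 0 := by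
  decide

theorem mk_eq_zsmul_mk_eSix {v : Fin 7 → ℤ} (hv : ![0, -1, 0, 0, 1, 0, 1] ⬝ᵥ v = 0) :
    (Submodule.Quotient.mk v : (Fin 7 → ℤ) ⧸ LinearMap.range AYMatrix.mulVecLin) =
      (v 0 + v 1 + v 4 + v 5) • Submodule.Quotient.mk eSix := by
  have h6 : -v 1 + v 4 + v 6 = 0 := by simpa [dotProduct, Fin.sum_univ_seven] using hv
  rw [← Submodule.Quotient.mk_smul, Submodule.Quotient.eq]
  refine ⟨![-v 0 - v 4, v 3, 0, 0, -v 4, v 1 + v 3, v 0 + v 2 + 2 * v 4], ?_⟩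
  ext i
  fin_cases i <;> simp [AYMatrix, eSix, mulVec, dotProduct, Fin.sum_univ_seven] <;> linarith

/-- `2·e₆` lies in the ℤ-span of the columns of `AYMatrix` but `e₆` does not; hence the
class of `e₆` (the homology class `F`) has order exactly 2 in the cokernel
`ℤ⁷ / im(M)`, and it generates the torsion subgroup of the cokernel. -/
theorem eSix_torsion :
    (2 • eSix ∈ LinearMap.range AYMatrix.mulVecLin) ∧
    eSix ∉ LinearMap.range AYMatrix.mulVecLin ∧
    addOrderOf
      (Submodule.Quotient.mk eSix :
        (Fin 7 → ℤ) ⧸ LinearMap.range AYMatrix.mulVecLin) = 2 ∧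
    (∀ x : (Fin 7 → ℤ) ⧸ LinearMap.range AYMatrix.mulVecLin,
      IsOfFinAddOrder x → ∃ n : ℤ, x = n • (Submodule.Quotient.mk eSix :
        (Fin 7 → ℤ) ⧸ LinearMap.range AYMatrix.mulVecLin)) := by
  have h2 : 2 • eSix ∈ LinearMap.range AYMatrix.mulVecLin :=
    ⟨_, AYMatrix_mulVec_eq_two_eSix⟩
  have h1 : eSix ∉ LinearMap.range AYMatrix.mulVecLin :=
    notMem_range_mulVecLin_of_dvd _ two_dvd_vecMul_AYMatrix (by decide)
  refine ⟨h2, h1, Submodule.addOrderOf_mk_eq_two h2 h1, ?_⟩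
  intro x hx
  obtain ⟨v, rfl⟩ := Submodule.Quotient.mk_surjective _ x
  exact ⟨_, mk_eq_zsmul_mk_eSix (dotProduct_eq_zero_of_isOfFinAddOrder vecMul_AYMatrix_eq_zero hx)⟩
end

section
/- Every additive group homomorphism φ : ℤ⁷ → ℤ that vanishes on the ℤ-span of the columns of M satisfies φ(e₁) = φ(e₃) = φ(e₄) = φ(e₆) = 0, φ(e₅) = φ(e₇), and φ(e₂) = −φ(e₇). (This computes the torsion-free quotient homomorphism ψ_Q on the homology classes A, …, G: the generator ν of the free part of the cokernel is the image of G, the classes A, C, D, F map to 0, E maps to ν, and B maps to ν⁻¹.) -/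
open Matrix

section

variable {m n : Type*} [Fintype m] [DecidableEq m] [Fintype n] [DecidableEq n]

theorem AddMonoidHom.map_mulVec_single_one (φ : (m → ℤ) →+ ℤ) (M : Matrix m n ℤ) (j : n) :
    φ (M *ᵥ Pi.single j 1) = ((fun i => φ (Pi.single i 1)) ᵥ* M) j := by
  rw [mulVec_single_one, pi_eq_sum_univ' (M.col j), map_sum]
  simp only [map_zsmul, smul_eq_mul, col_apply, vecMul, dotProduct, mul_comm]

theorem AddMonoidHom.vecMul_eq_zero_of_map_range_mulVecLin (φ : (m → ℤ) →+ ℤ)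
    (M : Matrix m n ℤ) (h : ∀ v ∈ LinearMap.range M.mulVecLin, φ v = 0) :
    (fun i => φ (Pi.single i 1)) ᵥ* M = 0 := by
  funext j
  rw [← φ.map_mulVec_single_one]
  exact h _ ⟨_, rfl⟩

end

theorem eq_smul_of_vecMul_AYMatrix_eq_zero (a : Fin 7 → ℤ) (h : a ᵥ* AYMatrix = 0) :
    a = a 6 • ![0, -1, 0, 0, 1, 0, 1] := by
  have hcol := congrFun h
  simp only [Fin.forall_fin_succ, vecMul, dotProduct, AYMatrix, Int.reduceNeg, Fin.isValue,
    of_apply, cons_val', cons_val_zero, cons_val_fin_one, Fin.sum_univ_seven, mul_neg, mul_one,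
    cons_val_one, mul_zero, add_zero, cons_val, zero_add, cons_val_succ, IsEmpty.forall_iff,
    and_true, Pi.zero_apply] at hcol
  funext i
  fin_cases i <;> simp <;> omega

/-- Any additive homomorphism `φ : ℤ⁷ → ℤ` vanishing on the ℤ-span of the columns of
`AYMatrix` kills `e₁, e₃, e₄, e₆` and satisfies `φ(e₅) = φ(e₇)`, `φ(e₂) = −φ(e₇)`.
(This computes the torsion-free quotient map `ψ_Q` on the classes A,…,G.) -/
theorem torsion_free_quotient_values :
    ∀ φ : (Fin 7 → ℤ) →+ ℤ,
      (∀ v ∈ LinearMap.range AYMatrix.mulVecLin, φ v = 0) →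
      φ (Pi.single 0 1) = 0 ∧
      φ (Pi.single 2 1) = 0 ∧
      φ (Pi.single 3 1) = 0 ∧
      φ (Pi.single 5 1) = 0 ∧
      φ (Pi.single 4 1) = φ (Pi.single 6 1) ∧
      φ (Pi.single 1 1) = -φ (Pi.single 6 1) := by
  intro φ h
  have hcoord := congrFun <| eq_smul_of_vecMul_AYMatrix_eq_zero _
    (φ.vecMul_eq_zero_of_map_range_mulVecLin _ h)
  exact ⟨by simpa using hcoord 0, by simpa using hcoord 2, by simpa using hcoord 3,
    by simpa using hcoord 5, by simpa using hcoord 4, by simpa using hcoord 1⟩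
end

section
/- Let α be the unique real root of x³ + x² + x − 1 (so 1/2 < α < 1), and let x₀ = ((α − α²)/(2(1 + α²)), α/(1 − α²)) ∈ ℝ². Then: (i) 0 ≤ (x₀)₁ ≤ (α + α²)/2 and α < (x₀)₂ ≤ 1 (so x₀ lies in region R₃); (ii) the point x₁ = (α·(x₀)₁ + α, (x₀)₂/α − 1) satisfies (α + α²)/2 < (x₁)₁ ≤ 1 and 0 ≤ (x₁)₂ ≤ α (so x₁ lies in region R₁); (iii) (α·(x₁)₁ − (α − α⁴)/2, (x₁)₂/α) = x₀; and (iv) x₁ ≠ x₀. Hence x₀ is a point of period exactly two for the piecewise-affine Arnoux–Yoccoz map h. -/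
/-!
The cubic gives `1 - α² = α(1 + α²)`, which turns the coordinates of `x₀` and `x₁` into
`x₀ = ((α - α²)/(2(1 + α²)), 1/(1 + α²))` and `x₁ = ((1 + α)/(2(1 + α²)), α/(1 + α²))`.
Every membership claim is then an elementary inequality for `1/2 < α < 1`, and the return
`x₁ ↦ x₀` reduces to the divisibility of `α⁵ + α³ - α² + 2α - 1` by the cubic. Since `x₀` and
`x₁` lie in the disjoint regions `R₃` and `R₁`, they are distinct.
-/

noncomputable section

namespace ArnouxYoccoz

def regionR₁ (α : ℝ) : Set (ℝ × ℝ) :=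
  {p | (α + α ^ 2) / 2 < p.1 ∧ p.1 ≤ 1 ∧ 0 ≤ p.2 ∧ p.2 ≤ α}

def regionR₃ (α : ℝ) : Set (ℝ × ℝ) :=
  {p | 0 ≤ p.1 ∧ p.1 ≤ (α + α ^ 2) / 2 ∧ α < p.2 ∧ p.2 ≤ 1}

def branchR₁ (α : ℝ) (p : ℝ × ℝ) : ℝ × ℝ := (α * p.1 - (α - α ^ 4) / 2, p.2 / α)

def branchR₃ (α : ℝ) (p : ℝ × ℝ) : ℝ × ℝ := (α * p.1 + α, p.2 / α - 1)

def periodTwoPoint (α : ℝ) : ℝ × ℝ := ((α - α ^ 2) / (2 * (1 + α ^ 2)), α / (1 - α ^ 2))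

theorem disjoint_regionR₁_regionR₃ (α : ℝ) : Disjoint (regionR₁ α) (regionR₃ α) :=
  Set.disjoint_left.mpr fun _ h₁ h₃ => h₁.1.not_ge h₃.2.1

section cubic

variable {α : ℝ}

theorem half_lt_of_cubic_eq_zero (hα : α ^ 3 + α ^ 2 + α - 1 = 0) : 1 / 2 < α := by
  nlinarith [sq_nonneg (α - 1 / 2), sq_nonneg (α + 1), sq_nonneg α]

theorem pos_of_cubic_eq_zero (hα : α ^ 3 + α ^ 2 + α - 1 = 0) : 0 < α :=
  one_half_pos.trans (half_lt_of_cubic_eq_zero hα)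

theorem lt_one_of_cubic_eq_zero (hα : α ^ 3 + α ^ 2 + α - 1 = 0) : α < 1 := by
  nlinarith [sq_nonneg (α - 1), sq_nonneg (α + 1)]

theorem one_sub_sq_eq_of_cubic_eq_zero (hα : α ^ 3 + α ^ 2 + α - 1 = 0) :
    1 - α ^ 2 = α * (1 + α ^ 2) := by
  linear_combination -hα

theorem periodTwoPoint_eq (hα : α ^ 3 + α ^ 2 + α - 1 = 0) :
    periodTwoPoint α = ((α - α ^ 2) / (2 * (1 + α ^ 2)), 1 / (1 + α ^ 2)) := by
  have hα₀ : α ≠ 0 := (pos_of_cubic_eq_zero hα).ne'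
  rw [periodTwoPoint, one_sub_sq_eq_of_cubic_eq_zero hα, div_mul_cancel_left₀ hα₀, one_div]

theorem branchR₃_periodTwoPoint (hα : α ^ 3 + α ^ 2 + α - 1 = 0) :
    branchR₃ α (periodTwoPoint α) = ((1 + α) / (2 * (1 + α ^ 2)), α / (1 + α ^ 2)) := by
  have hα₀ : α ≠ 0 := (pos_of_cubic_eq_zero hα).ne'
  rw [periodTwoPoint_eq hα, branchR₃, Prod.mk.injEq]
  constructor
  · field_simp
    linear_combination hα
  · field_simp
    linear_combination -hα

theorem periodTwoPoint_mem_regionR₃ (hα : α ^ 3 + α ^ 2 + α - 1 = 0) :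
    periodTwoPoint α ∈ regionR₃ α := by
  have h₁ := half_lt_of_cubic_eq_zero hα
  have h₂ := lt_one_of_cubic_eq_zero hα
  rw [periodTwoPoint_eq hα]
  refine ⟨div_nonneg (by nlinarith) (by positivity), ?_, ?_, ?_⟩
  · rw [div_le_div_iff₀ (by positivity) two_pos]; nlinarith
  · rw [lt_div_iff₀ (by positivity)]; nlinarith
  · rw [div_le_one (by positivity)]; nlinarith

theorem branchR₃_periodTwoPoint_mem_regionR₁ (hα : α ^ 3 + α ^ 2 + α - 1 = 0) :
    branchR₃ α (periodTwoPoint α) ∈ regionR₁ α := by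
  have h₁ := half_lt_of_cubic_eq_zero hα
  have h₂ := lt_one_of_cubic_eq_zero hα
  rw [branchR₃_periodTwoPoint hα]
  refine ⟨?_, ?_, by positivity, ?_⟩
  · rw [div_lt_div_iff₀ two_pos (by positivity)]; nlinarith
  · rw [div_le_one (by positivity)]; nlinarith
  · rw [div_le_iff₀ (by positivity)]; nlinarith

theorem branchR₁_branchR₃_periodTwoPoint (hα : α ^ 3 + α ^ 2 + α - 1 = 0) :
    branchR₁ α (branchR₃ α (periodTwoPoint α)) = periodTwoPoint α := by
  have hα₀ : α ≠ 0 := (pos_of_cubic_eq_zero hα).ne'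
  rw [branchR₃_periodTwoPoint hα, periodTwoPoint_eq hα, branchR₁, Prod.mk.injEq]
  constructor
  · field_simp
    linear_combination (α ^ 2 - α + 1) * hα
  · field_simp

theorem branchR₃_periodTwoPoint_ne (hα : α ^ 3 + α ^ 2 + α - 1 = 0) :
    branchR₃ α (periodTwoPoint α) ≠ periodTwoPoint α :=
  (disjoint_regionR₁_regionR₃ α).ne_of_mem (branchR₃_periodTwoPoint_mem_regionR₁ hα)
    (periodTwoPoint_mem_regionR₃ hα)

end cubic

end ArnouxYoccoz

end

open ArnouxYoccoz in
/-- Let `α` be the unique real root of `x³ + x² + x − 1`, and let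
`x₀ = ((α − α²)/(2(1 + α²)), α/(1 − α²))`.  Then `x₀` lies in region `R₃`, its image
`x₁ = (α·(x₀)₁ + α, (x₀)₂/α − 1)` under the branch of `h` on `R₃` lies in region `R₁`,
the branch of `h` on `R₁` carries `x₁` back to `x₀`, and `x₁ ≠ x₀`.  Hence `x₀` is a
point of period exactly two for the Arnoux–Yoccoz map `h`. -/
theorem period_two_point :
    ∀ α : ℝ, α ^ 3 + α ^ 2 + α - 1 = 0 →
      (0 ≤ (α - α ^ 2) / (2 * (1 + α ^ 2)) ∧
        (α - α ^ 2) / (2 * (1 + α ^ 2)) ≤ (α + α ^ 2) / 2 ∧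
        α < α / (1 - α ^ 2) ∧ α / (1 - α ^ 2) ≤ 1) ∧
      ((α + α ^ 2) / 2 < α * ((α - α ^ 2) / (2 * (1 + α ^ 2))) + α ∧
        α * ((α - α ^ 2) / (2 * (1 + α ^ 2))) + α ≤ 1 ∧
        0 ≤ α / (1 - α ^ 2) / α - 1 ∧ α / (1 - α ^ 2) / α - 1 ≤ α) ∧
      (α * (α * ((α - α ^ 2) / (2 * (1 + α ^ 2))) + α) - (α - α ^ 4) / 2 =
          (α - α ^ 2) / (2 * (1 + α ^ 2)) ∧
        (α / (1 - α ^ 2) / α - 1) / α = α / (1 - α ^ 2)) ∧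
      ((α * ((α - α ^ 2) / (2 * (1 + α ^ 2))) + α, α / (1 - α ^ 2) / α - 1) ≠
        ((α - α ^ 2) / (2 * (1 + α ^ 2)), α / (1 - α ^ 2))) := fun _ hα =>
  ⟨periodTwoPoint_mem_regionR₃ hα, branchR₃_periodTwoPoint_mem_regionR₁ hα,
    Prod.ext_iff.mp (branchR₁_branchR₃_periodTwoPoint hα), branchR₃_periodTwoPoint_ne hα⟩
end

section
/- For every integer g with 4 ≤ g ≤ 10 and every integer b with 1 ≤ b ≤ g − 1, the polynomial X^g − X^{g−1} − X^{g−2} − ⋯ − X − 1 does NOT divide the polynomial X^{2g} − X^{g+b} − 4·X^{g} − X^{g−b} + 1 in ℤ[X]. (Hence for 4 ≤ g ≤ 10 the genus-g Arnoux–Yoccoz pseudo-Anosov map, whose stretch factor is the largest root of X^g − Σ_{i=0}^{g−1} X^i, cannot arise by blowing down a cross section of the mapping torus of the blown-up genus-3 Arnoux–Yoccoz map.) -/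
open Polynomial Finset

/-!
Evaluating a divisibility of integer polynomials at an integer gives a divisibility of
integers. At `X = 1` the Arnoux–Yoccoz polynomial takes the value `1 - g` and the
specialization the value `-4`, so `g - 1 ∣ 4`, which for `g ≥ 4` leaves only `g = 5`.
For `g = 5`, evaluation at `X = 3` gives `122 ∣ 3^10 - 3^(5+b) - 4·3^5 - 3^(5-b) + 1`,
which fails for each `b = 1, …, 4`.
-/

section

variable (R : Type*) [CommRing R]

noncomputable def arnouxYoccozPoly (g : ℕ) : R[X] :=
  X ^ g - ∑ i ∈ range g, X ^ i

noncomputable def blowupSpecialization (g b : ℕ) : R[X] :=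
  X ^ (2 * g) - X ^ (g + b) - 4 * X ^ g - X ^ (g - b) + 1

variable {R}

@[simp]
theorem eval_one_arnouxYoccozPoly (g : ℕ) : (arnouxYoccozPoly R g).eval 1 = 1 - g := by
  simp [arnouxYoccozPoly]

@[simp]
theorem eval_one_blowupSpecialization (g b : ℕ) :
    (blowupSpecialization R g b).eval 1 = -4 := by
  norm_num [blowupSpecialization]

end

theorem sub_one_dvd_four_of_arnouxYoccozPoly_dvd {g b : ℕ}
    (h : arnouxYoccozPoly ℤ g ∣ blowupSpecialization ℤ g b) : (g : ℤ) - 1 ∣ 4 := by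
  have h₁ := eval_dvd (x := 1) h
  rw [eval_one_arnouxYoccozPoly, eval_one_blowupSpecialization] at h₁
  rwa [← neg_sub, neg_dvd, dvd_neg] at h₁

theorem eq_five_of_sub_one_dvd_four {g : ℕ} (hg : 4 ≤ g) (h : (g : ℤ) - 1 ∣ 4) : g = 5 := by
  have hle : (g : ℤ) - 1 ≤ 4 := Int.le_of_dvd (by norm_num) h
  obtain rfl | rfl : g = 4 ∨ g = 5 := by omega
  · norm_num at h
  · rfl

theorem not_arnouxYoccozPoly_five_dvd {b : ℕ} (hb₁ : 1 ≤ b) (hb₄ : b ≤ 4) :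
    ¬ arnouxYoccozPoly ℤ 5 ∣ blowupSpecialization ℤ 5 b := by
  intro h
  have h₃ := eval_dvd (x := 3) h
  interval_cases b <;>
    norm_num [arnouxYoccozPoly, blowupSpecialization, sum_range_succ] at h₃

/-- For every `4 ≤ g ≤ 10` and `1 ≤ b ≤ g − 1`, the minimal polynomial
`X^g − X^{g−1} − ⋯ − X − 1` of the genus-`g` Arnoux–Yoccoz stretch factor does not
divide the specialization `X^{2g} − X^{g+b} − 4X^g − X^{g−b} + 1` in `ℤ[X]`.
Hence for `4 ≤ g ≤ 10` the genus-`g` Arnoux–Yoccoz pseudo-Anosov map cannot arise by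
blowing down a cross section of the mapping torus of the blown-up genus-3
Arnoux–Yoccoz map. -/
theorem higher_genus_excluded :
    ∀ g b : ℕ, 4 ≤ g → g ≤ 10 → 1 ≤ b → b ≤ g - 1 →
      ¬ ((X ^ g - ∑ i ∈ Finset.range g, X ^ i : Polynomial ℤ) ∣
          (X ^ (2 * g) - X ^ (g + b) - 4 * X ^ g - X ^ (g - b) + 1 : Polynomial ℤ)) := by
  intro g b hg₄ _ hb₁ hb h
  obtain rfl : g = 5 :=
    eq_five_of_sub_one_dvd_four hg₄ (sub_one_dvd_four_of_arnouxYoccozPoly_dvd h)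
  exact not_arnouxYoccozPoly_five_dvd hb₁ hb h
end
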